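/- Let G be a (pan, even hole)-free graph, B an odd ℓ-buoy in G (ℓ ≥ 5), and x a vertex outside B. If x has a neighbor in B_{i-1} and a neighbor in B_{i+1}, then x is adjacent to every vertex of B_i. -/

import Mathlib

def IsHole {V : Type*} (G : SimpleGraph V) (n : ℕ) (f : ZMod n → V) : Prop :=
  4 ≤ n ∧ Function.Injective f ∧
    ∀ i j : ZMod n, G.Adj (f i) (f j) ↔ (j = i + 1 ∨ i = j + 1)

def HasInducedPan {V : Type*} (G : SimpleGraph V) : Prop :=
  ∃ (n : ℕ) (f : ZMod n → V) (x : V),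
    IsHole G n f ∧ x ∉ Set.range f ∧ ∃! i : ZMod n, G.Adj x (f i)

def HasEvenHole {V : Type*} (G : SimpleGraph V) : Prop :=
  ∃ (n : ℕ) (f : ZMod n → V), IsHole G n f ∧ Even n

def IsBuoy {V : Type*} (G : SimpleGraph V) (ℓ : ℕ) (B : ZMod ℓ → Set V) : Prop :=
  5 ≤ ℓ ∧
  (∀ i, (B i).Nonempty) ∧
  (∀ i, G.IsClique (B i)) ∧
  (Pairwise fun i j => Disjoint (B i) (B j)) ∧
  (∀ i, ∀ v ∈ B i, ∃ u ∈ B (i + 1), G.Adj v u) ∧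
  (∀ i, ∀ v ∈ B i, ∃ u ∈ B (i - 1), G.Adj v u) ∧
  (∀ i j : ZMod ℓ, j ≠ i → j ≠ i + 1 → j ≠ i - 1 →
    ∀ v ∈ B i, ∀ u ∈ B j, ¬ G.Adj v u)

/-!
Translate so that `i = 0` and suppose that `x` misses `b ∈ B 0`. If no neighbour of `x` in
`B (-1) ∪ B 1` is adjacent to `b`, such neighbours close a 6-hole through `x`. Otherwise, after
possibly reflecting the buoy, `x` sees some `a ∈ B (-1)` adjacent to `b` and some `c ∈ B 1`.
Then `x` misses every neighbour `k₁ ∈ B 1` of `b` (else `x a b k₁` is a 4-hole), so `c x a b k₁`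
is a 5-hole, and pan-freeness against it makes `x` complete to the neighbours of `a` in `B (-2)`
and anticomplete to `B 3, …, B (ℓ - 3)`.

Even-hole-freeness yields a hole `b = k₀, k₁, …, k_{ℓ-2}, a` meeting every bag once: a walk
around the buoy that closes up badly is an `(ℓ + 1)`-hole. Pan-freeness on this hole gives
`c ∼ k₂`, and then `x ∼ k₂`, since otherwise `c k₂ … k_{ℓ-2} x` is an `(ℓ - 1)`-hole. For
`ℓ ≥ 7`, `k₃` has a single neighbour on the 5-hole `x a b k₁ k₂`; for `ℓ = 5`, a neighbour of `c`
in `B 0` leads to an even hole or forces `x ∼ k₁`.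
-/

namespace ZMod

theorem eq_add_one_iff_val {n : ℕ} [NeZero n] (hn : 1 < n) (i j : ZMod n) :
    j = i + 1 ↔ j.val = i.val + 1 ∨ (i.val + 1 = n ∧ j.val = 0) := by
  have : Fact (1 < n) := ⟨hn⟩
  rw [← (ZMod.val_injective n).eq_iff, ZMod.val_add, ZMod.val_one]
  have := ZMod.val_lt i
  have := ZMod.val_lt j
  rcases (show i.val + 1 < n ∨ i.val + 1 = n by omega) with h | h
  · rw [Nat.mod_eq_of_lt h]; omega
  · rw [h, Nat.mod_self]; omega

theorem natCast_ne_natCast_of_lt {ℓ s t : ℕ} (h : s < t) (h' : t < s + ℓ) : (s : ZMod ℓ) ≠ t := by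
  rw [Ne, ZMod.natCast_eq_natCast_iff']
  intro heq
  have := Nat.le_of_dvd (by omega) ((Nat.modEq_iff_dvd' h.le).1 heq)
  omega

theorem natCast_self_sub {ℓ k : ℕ} (h : k ≤ ℓ) : ((ℓ - k : ℕ) : ZMod ℓ) = -k := by
  rw [Nat.cast_sub h, ZMod.natCast_self, zero_sub]

end ZMod

section

variable {V : Type*} {G : SimpleGraph V}

def IsInducedPath (G : SimpleGraph V) {n : ℕ} (p : Fin n → V) : Prop :=
  Function.Injective p ∧ ∀ s t, G.Adj (p s) (p t) ↔ (s : ℕ) + 1 = t ∨ (t : ℕ) + 1 = s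

theorem isInducedPath_singleton (v : V) : IsInducedPath G ![v] :=
  ⟨Function.injective_of_subsingleton _, fun s t => by
    simp [Fin.fin_one_eq_zero s, Fin.fin_one_eq_zero t]⟩

namespace IsInducedPath

theorem cons {n : ℕ} {p : Fin (n + 1) → V} {v : V} (hp : IsInducedPath G p)
    (hv : ∀ t, p t ≠ v) (h0 : G.Adj v (p 0)) (hrest : ∀ t : Fin n, ¬G.Adj v (p t.succ)) :
    IsInducedPath G (Fin.cons v p : Fin (n + 2) → V) := by
  have hv' : ∀ t : Fin (n + 1), G.Adj v (p t) ↔ (t : ℕ) = 0 := fun t =>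
    Fin.cases (by simpa using h0) (fun t => by simpa using hrest t) t
  refine ⟨Fin.cons_injective_iff.2 ⟨fun ⟨t, ht⟩ => hv t ht, hp.1⟩, fun s t => ?_⟩
  refine Fin.cases (Fin.cases ?_ (fun t => ?_) t) (fun s => Fin.cases ?_ (fun t => ?_) t) s
  · simp
  · simp [hv' t]
  · simp [G.adj_comm _ v, hv' s]
  · simp [hp.2 s t]

theorem isHole_cons {m : ℕ} {p : Fin (m + 1) → V} {z : V} (hp : IsInducedPath G p) (hm : 2 ≤ m)
    (hz : ∀ t, p t ≠ z) (h0 : G.Adj z (p 0)) (hlast : G.Adj z (p (Fin.last m)))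
    (hmid : ∀ t : Fin (m + 1), 0 < (t : ℕ) → (t : ℕ) < m → ¬G.Adj z (p t)) :
    IsHole G (m + 2) (Fin.cons z p : Fin (m + 2) → V) := by
  have hz' : ∀ t : Fin (m + 1), G.Adj z (p t) ↔ (t : ℕ) = 0 ∨ (t : ℕ) = m := fun t => by
    rcases (show (t : ℕ) = 0 ∨ (t : ℕ) = m ∨ (0 < (t : ℕ) ∧ (t : ℕ) < m) by omega) with h | h | h
    · obtain rfl : t = 0 := by simp [Fin.ext_iff, h]
      simpa using h0
    · obtain rfl : t = Fin.last m := by simp [Fin.ext_iff, h]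
      simpa using hlast
    · simpa [h.1.ne', h.2.ne] using hmid t h.1 h.2
  let f : Fin (m + 2) → V := Fin.cons z p
  suffices h : ∀ i j : Fin (m + 2), G.Adj (f i) (f j) ↔
      ((j : ℕ) = i + 1 ∨ ((i : ℕ) + 1 = m + 2 ∧ (j : ℕ) = 0)) ∨
      ((i : ℕ) = j + 1 ∨ ((j : ℕ) + 1 = m + 2 ∧ (i : ℕ) = 0)) from
    ⟨by omega, Fin.cons_injective_iff.2 ⟨fun ⟨t, ht⟩ => hz t ht, hp.1⟩, fun i j => by
      rw [ZMod.eq_add_one_iff_val (by omega), ZMod.eq_add_one_iff_val (by omega)]; exact h i j⟩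
  intro i j
  refine Fin.cases (Fin.cases ?_ (fun t => ?_) j) (fun s => Fin.cases ?_ (fun t => ?_) j) i
  · simp [f]
  · simp [f, hz' t]
  · simp [f, G.adj_comm _ z, hz' s]; omega
  · simp [f, hp.2 s t]; omega

end IsInducedPath

theorem IsHole.hasInducedPan {m : ℕ} {p : Fin (m + 1) → V} {z y : V}
    (hH : IsHole G (m + 2) (Fin.cons z p : Fin (m + 2) → V)) (hzy : z ≠ y) (hpy : ∀ t, p t ≠ y)
    (hnadj : ¬G.Adj z y) (t₀ : Fin (m + 1)) (hadj : ∀ t, G.Adj (p t) y ↔ t = t₀) :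
    HasInducedPan G := by
  let f : Fin (m + 2) → V := Fin.cons z p
  refine ⟨m + 2, f, y, hH, ?_, t₀.succ, by simpa [f] using ((hadj t₀).2 rfl).symm, fun j hj => ?_⟩
  · rintro ⟨j, hj⟩
    exact Fin.cases (motive := fun j : Fin (m + 2) => f j ≠ y)
      (by simpa [f] using hzy) (fun t => by simpa [f] using hpy t) j hj
  · exact Fin.cases (motive := fun j : Fin (m + 2) => G.Adj y (f j) → j = t₀.succ)
      (fun h => absurd (by simpa [f] using h.symm) hnadj)
      (fun t h => by simpa using (hadj t).1 (by simpa [f] using h.symm)) j hj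

namespace IsBuoy

variable {ℓ : ℕ} {B : ZMod ℓ → Set V} {b b' u u' v w x : V}

theorem five_le (hB : IsBuoy G ℓ B) : 5 ≤ ℓ := hB.1

theorem isClique (hB : IsBuoy G ℓ B) (j : ZMod ℓ) : G.IsClique (B j) := hB.2.2.1 j

theorem exists_adj_add_one (hB : IsBuoy G ℓ B) {j : ZMod ℓ} (hv : v ∈ B j) :
    ∃ u ∈ B (j + 1), G.Adj v u :=
  hB.2.2.2.2.1 j v hv

theorem exists_adj_sub_one (hB : IsBuoy G ℓ B) {j : ZMod ℓ} (hv : v ∈ B j) :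
    ∃ u ∈ B (j - 1), G.Adj v u :=
  hB.2.2.2.2.2.1 j v hv

theorem comp_add (hB : IsBuoy G ℓ B) (i : ZMod ℓ) : IsBuoy G ℓ fun j => B (i + j) := by
  obtain ⟨hl, hne, hcl, hdisj, hsucc, hpred, hfar⟩ := hB
  refine ⟨hl, fun j => hne _, fun j => hcl _, fun j k hjk => hdisj fun h => hjk (add_left_cancel h),
    fun j => by simpa [add_assoc] using hsucc (i + j),
    fun j => by simpa [add_sub_assoc] using hpred (i + j),
    fun j k h0 h1 h2 => hfar (i + j) (i + k) ?_ ?_ ?_⟩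
  · exact fun h => h0 (add_left_cancel h)
  · exact fun h => h1 (add_left_cancel (h.trans (add_assoc _ _ _)))
  · exact fun h => h2 (add_left_cancel (h.trans (add_sub_assoc _ _ _)))

theorem comp_neg (hB : IsBuoy G ℓ B) : IsBuoy G ℓ fun j => B (-j) := by
  obtain ⟨hl, hne, hcl, hdisj, hsucc, hpred, hfar⟩ := hB
  refine ⟨hl, fun j => hne _, fun j => hcl _, fun j k hjk => hdisj fun h => hjk (neg_inj.1 h),
    fun j v hv => by simpa [neg_add', sub_eq_add_neg, add_comm] using hpred (-j) v hv,
    fun j v hv => by simpa [neg_sub, sub_eq_add_neg, add_comm] using hsucc (-j) v hv,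
    fun j k h0 h1 h2 => hfar (-j) (-k) ?_ ?_ ?_⟩
  · exact fun h => h0 (neg_inj.1 h)
  · exact fun h => h2 (by linear_combination -h)
  · exact fun h => h1 (by linear_combination -h)

theorem ne_of_mem (hB : IsBuoy G ℓ B) {s t : ℕ} (hu : u ∈ B s) (hv : v ∈ B t)
    (h : s < t ∧ t < s + ℓ ∨ t < s ∧ s < t + ℓ) : u ≠ v := by
  rintro rfl
  have hst : (s : ZMod ℓ) ≠ t := by
    rcases h with h | h
    · exact ZMod.natCast_ne_natCast_of_lt h.1 h.2
    · exact (ZMod.natCast_ne_natCast_of_lt h.1 h.2).symm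
  exact Set.disjoint_left.1 (hB.2.2.2.1 hst) hu hv

theorem not_adj_of_mem (hB : IsBuoy G ℓ B) {s t : ℕ} (hu : u ∈ B s) (hv : v ∈ B t)
    (h : s + 2 ≤ t ∧ t + 2 ≤ s + ℓ ∨ t + 2 ≤ s ∧ s + 2 ≤ t + ℓ) : ¬G.Adj u v := by
  wlog hst : s + 2 ≤ t ∧ t + 2 ≤ s + ℓ generalizing s t u v
  · exact fun huv => this hv hu (by omega) (by omega) huv.symm
  refine hB.2.2.2.2.2.2 s t ?_ ?_ ?_ u hu v hv
  · exact (ZMod.natCast_ne_natCast_of_lt (by omega) (by omega)).symm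
  · simpa using (ZMod.natCast_ne_natCast_of_lt (s := s + 1) (t := t) (ℓ := ℓ)
      (by omega) (by omega)).symm
  · intro h'
    refine ZMod.natCast_ne_natCast_of_lt (s := s) (t := t + 1) (ℓ := ℓ) (by omega) (by omega) ?_
    rw [Nat.cast_succ, h', sub_add_cancel]

theorem isInducedPath (hB : IsBuoy G ℓ B) {m : ℕ} (hm : m + 2 ≤ ℓ) {j : ZMod ℓ}
    {p : Fin (m + 1) → V} (hmem : ∀ t : Fin (m + 1), p t ∈ B (j + (t : ℕ)))
    (hadj : ∀ t : Fin m, G.Adj (p t.castSucc) (p t.succ)) : IsInducedPath G p := by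
  have hB' := hB.comp_add j
  have hsucc : ∀ s t : Fin (m + 1), (s : ℕ) + 1 = t → G.Adj (p s) (p t) := by
    intro s t hst
    have := hadj ⟨s, by omega⟩
    rwa [show (Fin.castSucc ⟨s, _⟩ : Fin (m + 1)) = s from Fin.ext rfl,
      show (Fin.succ ⟨s, _⟩ : Fin (m + 1)) = t from Fin.ext hst] at this
  refine ⟨fun s t hst => Fin.ext ?_, fun s t => ⟨fun h => ?_, ?_⟩⟩
  · by_contra hne
    exact hB'.ne_of_mem (hmem s) (hmem t) (by omega) hst
  · by_contra hne
    have hst : (s : ℕ) ≠ t := fun e => G.loopless.irrefl _ ((Fin.ext e : s = t) ▸ h)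
    exact hB'.not_adj_of_mem (hmem s) (hmem t) (by omega) h
  · rintro (h | h)
    · exact hsucc s t h
    · exact (hsucc t s h).symm

theorem exists_walk (hB : IsBuoy G ℓ B) {j : ZMod ℓ} (hv : v ∈ B j) :
    ∃ w : ℕ → V, w 0 = v ∧ ∀ t : ℕ, w t ∈ B (j + t) ∧ G.Adj (w t) (w (t + 1)) := by
  have step : ∀ (i : ZMod ℓ) (u : V), ∃ u', u ∈ B i → u' ∈ B (i + 1) ∧ G.Adj u u' := by
    intro i u
    by_cases hu : u ∈ B i
    · obtain ⟨u', hu', huu'⟩ := hB.exists_adj_add_one hu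
      exact ⟨u', fun _ => ⟨hu', huu'⟩⟩
    · exact ⟨u, fun h => absurd h hu⟩
  choose next hnext using step
  let w : ℕ → V := fun t => Nat.rec v (fun t u => next (j + t) u) t
  have hw : ∀ t : ℕ, w t ∈ B (j + t) := by
    intro t
    induction t with
    | zero => simpa [w] using hv
    | succ t ih => simpa [w, add_assoc] using (hnext _ _ ih).1
  exact ⟨w, rfl, fun t => ⟨hw t, (hnext _ _ (hw t)).2⟩⟩

theorem adj_mid_of_adj_ends (hB : IsBuoy G ℓ B) (heven : ¬HasEvenHole G) (hx : ∀ j, x ∉ B j)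
    {j : ZMod ℓ} (hu : u ∈ B (j - 1)) (hw : w ∈ B j) (hv : v ∈ B (j + 1)) (huw : G.Adj u w)
    (hwv : G.Adj w v) (hxu : G.Adj x u) (hxv : G.Adj x v) : G.Adj x w := by
  by_contra hxw
  have hp : IsInducedPath G ![u, w, v] :=
    hB.isInducedPath (j := j - 1) (by linarith [hB.five_le])
      (by simp [Fin.forall_fin_succ, hu, hw, hv]) (by simp [Fin.forall_fin_two, huw, hwv])
  have hxp : ∀ t, ![u, w, v] t ≠ x := by
    simp [Fin.forall_fin_succ, ne_of_mem_of_not_mem hu (hx _), ne_of_mem_of_not_mem hw (hx _),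
      ne_of_mem_of_not_mem hv (hx _)]
  exact heven ⟨_, _, hp.isHole_cons le_rfl hxp hxu hxv (by simp [Fin.forall_fin_succ, hxw]),
    by decide⟩

theorem adj_or_adj_of_adj_of_adj (hB : IsBuoy G ℓ B) (heven : ¬HasEvenHole G) {j : ZMod ℓ}
    (hb : b ∈ B j) (hb' : b' ∈ B j) (hu : u ∈ B (j + 1)) (hu' : u' ∈ B (j + 1))
    (hbu : G.Adj b u) (hbu' : G.Adj b' u') : G.Adj b u' ∨ G.Adj b' u := by
  by_contra! h
  obtain ⟨hbu'', hb'u⟩ := h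
  have hB' := hB.comp_add j
  have hbb' : b ≠ b' := fun e => hbu'' (e ▸ hbu')
  have huu' : u ≠ u' := fun e => hb'u (e ▸ hbu')
  have hne : ∀ {y z : V}, y ∈ B j → z ∈ B (j + 1) → y ≠ z := fun hy hz =>
    hB'.ne_of_mem (s := 0) (t := 1) (by simpa using hy) (by simpa using hz)
      (by have := hB.five_le; omega)
  have hp : IsInducedPath G ![u, u', b'] :=
    ((isInducedPath_singleton b').cons (by simp [hne hb' hu']) (by simpa using hbu'.symm)
      (by simp)).cons (by simp [huu'.symm, hne hb' hu]) (by simpa using hB.isClique _ hu hu' huu')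
      (by simpa [G.adj_comm] using hb'u)
  exact heven ⟨_, _, hp.isHole_cons le_rfl
    (by simp [Fin.forall_fin_succ, (hne hb hu).symm, (hne hb hu').symm, hbb'.symm]) hbu
    (by simpa using hB.isClique _ hb hb' hbb') (by simpa [Fin.forall_fin_succ] using hbu''),
    by decide⟩

/-- Otherwise `u 0, …, u ℓ` would be an `(ℓ + 1)`-hole, and `ℓ + 1` is even. -/
theorem adj_or_adj_of_wrap (hB : IsBuoy G ℓ B) (hodd : Odd ℓ) (heven : ¬HasEvenHole G)
    {j : ZMod ℓ} {u : ℕ → V} (hmem : ∀ t ≤ ℓ, u t ∈ B (j + t))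
    (hadj : ∀ t < ℓ, G.Adj (u t) (u (t + 1))) (hne : u 0 ≠ u ℓ) :
    G.Adj (u 0) (u (ℓ - 1)) ∨ G.Adj (u 1) (u ℓ) := by
  by_contra! h
  obtain ⟨h0, h1⟩ := h
  have hl := hB.five_le
  have hB' := hB.comp_add j
  have hq : IsInducedPath G fun t : Fin (ℓ - 2 + 1) => u (t + 1) :=
    hB.isInducedPath (j := j + 1) (by omega)
      (fun t => by convert hmem (t + 1) (by omega) using 2; push_cast; ring)
      (fun t => by simpa using hadj (t + 1) (by omega))
  have hp := hq.cons (v := u 0)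
    (fun t => hB'.ne_of_mem (hmem _ (by omega)) (hmem 0 (by omega)) (by omega))
    (by simpa using hadj 0 (by omega)) fun t => by
      rcases (show (t : ℕ) + 1 + 1 = ℓ - 1 ∨ (t : ℕ) + 1 + 1 + 2 ≤ ℓ by omega) with e | e
      · simpa [e] using h0
      · exact hB'.not_adj_of_mem (hmem 0 (by omega)) (hmem ((t : ℕ) + 1 + 1) (by omega))
          (by omega)
  have hz : ∀ t, (Fin.cons (u 0) (fun t : Fin (ℓ - 2 + 1) => u (t + 1)) : Fin (ℓ - 2 + 2) → V) t
      ≠ u ℓ :=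
    fun t => Fin.cases (by simpa using hne) (fun t => by
      simpa using hB'.ne_of_mem (hmem (t + 1) (by omega)) (hmem ℓ le_rfl) (by omega)) t
  have hℓ : u ℓ ∈ B j := by simpa using hmem ℓ le_rfl
  have h0' : u 0 ∈ B j := by simpa using hmem 0 (by omega)
  have hH := hp.isHole_cons (z := u ℓ) (by omega) hz
    (by simpa using hB.isClique j hℓ h0' hne.symm)
    (by simpa [show ℓ - 2 + 1 = ℓ - 1 by omega, show ℓ - 1 + 1 = ℓ by omega]
      using (hadj (ℓ - 1) (by omega)).symm)
    fun t => Fin.cases (by simp) (fun s _ hs => by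
      simp only [Fin.cons_succ, Fin.val_succ] at hs ⊢
      rcases (show (s : ℕ) = 0 ∨ 1 ≤ (s : ℕ) by omega) with e | e
      · simpa [e, G.adj_comm] using h1
      · exact hB'.not_adj_of_mem (hmem ℓ le_rfl) (hmem ((s : ℕ) + 1) (by omega)) (by omega)) t
  obtain ⟨r, hr⟩ := hodd
  exact heven ⟨_, _, hH, r + 1, by omega⟩

end IsBuoy

structure IsTransversal {ℓ : ℕ} (G : SimpleGraph V) (B : ZMod ℓ → Set V) (a b : V) (k : ℕ → V) :
    Prop where
  zero : k 0 = b
  mem : ∀ t : ℕ, k t ∈ B t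
  adj : ∀ t < ℓ - 2, G.Adj (k t) (k (t + 1))
  adj_last : G.Adj (k (ℓ - 2)) a

namespace IsBuoy

variable {ℓ : ℕ} {B : ZMod ℓ → Set V} {a b c x : V}

theorem exists_isTransversal (hB : IsBuoy G ℓ B) (hodd : Odd ℓ) (heven : ¬HasEvenHole G)
    (ha : a ∈ B (-1)) (hb : b ∈ B 0) (hab : G.Adj a b) : ∃ k, IsTransversal G B a b k := by
  have hl := hB.five_le
  obtain ⟨w, hw0, hw⟩ := hB.exists_walk hb
  have hwmem : ∀ t : ℕ, w t ∈ B t := fun t => by simpa using (hw t).1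
  by_cases hwa : G.Adj (w (ℓ - 2)) a
  · exact ⟨w, hw0, hwmem, fun t _ => (hw t).2, hwa⟩
  obtain ⟨d, hd, had⟩ := hB.exists_adj_sub_one ha
  let u : ℕ → V := fun t => if t = 0 then d else if t = 1 then a else w (t - 2)
  have hwrap := hB.adj_or_adj_of_wrap hodd heven (j := -2) (u := u) (fun t _ => by
      rcases t with _ | _ | t
      · simpa [u, show (-1 - 1 : ZMod ℓ) = -2 by ring] using hd
      · simpa [u, show (-2 + 1 : ZMod ℓ) = -1 by ring] using ha
      · convert hwmem t using 2
        · push_cast; ring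
        · simp [u])
    (fun t _ => by
      rcases t with _ | _ | t
      · simpa [u] using had.symm
      · simpa [u, hw0] using hab
      · simpa [u] using (hw t).2)
    (by simp only [u, if_pos, show ℓ ≠ 0 by omega, show ℓ ≠ 1 by omega, if_false]
        rintro rfl
        exact hwa had.symm)
  simp only [u, if_pos, show ℓ - 1 ≠ 0 by omega, show ℓ - 1 ≠ 1 by omega, show ℓ ≠ 0 by omega,
    show ℓ ≠ 1 by omega, if_false, one_ne_zero, show ℓ - 1 - 2 = ℓ - 3 by omega] at hwrap
  rcases hwrap with hdw | haw
  · refine ⟨Function.update w (ℓ - 2) d, by simp [show 0 ≠ ℓ - 2 by omega, hw0], fun t => ?_,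
      fun t ht => ?_, by simpa using had.symm⟩
    · rcases eq_or_ne t (ℓ - 2) with rfl | ht
      · simpa [ZMod.natCast_self_sub (show 2 ≤ ℓ by omega), show (-1 - 1 : ZMod ℓ) = -2 by ring]
          using hd
      · simpa [ht] using hwmem t
    · rcases eq_or_ne (t + 1) (ℓ - 2) with e | e
      · obtain rfl : t = ℓ - 3 := by omega
        simpa [e, show ℓ - 3 ≠ ℓ - 2 by omega] using hdw.symm
      · simpa [e, show t ≠ ℓ - 2 by omega] using (hw t).2
  · exact absurd haw.symm hwa

theorem exists_common_nbr (hB : IsBuoy G ℓ B) (heven : ¬HasEvenHole G) (hx : ∀ j, x ∉ B j)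
    (ha : a ∈ B (-1)) (hb : b ∈ B 0) (hc : c ∈ B 1) (hxa : G.Adj x a) (hxc : G.Adj x c)
    (hxb : ¬G.Adj x b) :
    (∃ a' ∈ B (-1), G.Adj x a' ∧ G.Adj a' b) ∨ ∃ c' ∈ B 1, G.Adj x c' ∧ G.Adj c' b := by
  by_contra! hno
  obtain ⟨ha'b, hc'b⟩ := hno
  have hl := hB.five_le
  obtain ⟨a', ha', hba'⟩ := hB.exists_adj_sub_one hb
  obtain ⟨c', hc', hbc'⟩ := hB.exists_adj_add_one hb
  rw [zero_sub] at ha'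
  rw [zero_add] at hc'
  have hxa' : ¬G.Adj x a' := fun h => ha'b a' ha' h hba'.symm
  have hxc' : ¬G.Adj x c' := fun h => hc'b c' hc' h hbc'.symm
  have haa' : a' ≠ a := fun e => hxa' (e ▸ hxa)
  have hcc' : c' ≠ c := fun e => hxc' (e ▸ hxc)
  have hpred : ∀ {v}, v ∈ B (-1) → v ∈ B (ℓ - 1 : ℕ) := fun hv => by
    rwa [ZMod.natCast_self_sub (by omega), Nat.cast_one]
  have hsucc : ∀ {v}, v ∈ B 1 → v ∈ B (1 : ℕ) := fun hv => by simpa using hv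
  have hb0 : b ∈ B (0 : ℕ) := by simpa using hb
  have hne : ∀ {j : ZMod ℓ} {v}, v ∈ B j → v ≠ x := fun hv => ne_of_mem_of_not_mem hv (hx _)
  have hp : IsInducedPath G ![x, a, a', b, c'] :=
    ((hB.isInducedPath (j := -1) (by omega) (by simp [Fin.forall_fin_succ, ha', hb, hc'])
      (by simp [Fin.forall_fin_succ, hba'.symm, hbc'])).cons
      (by simp [Fin.forall_fin_succ, haa', hB.ne_of_mem hb0 (hpred ha) (by omega),
        hB.ne_of_mem (hsucc hc') (hpred ha) (by omega)])
      (by simpa using hB.isClique _ ha ha' haa'.symm)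
      (by simp [Fin.forall_fin_succ, ha'b a ha hxa,
        hB.not_adj_of_mem (hpred ha) (hsucc hc') (by omega)])).cons
      (by simp [Fin.forall_fin_succ, hne ha, hne ha', hne hb, hne hc']) (by simpa using hxa)
      (by simp [Fin.forall_fin_succ, hxa', hxb, hxc'])
  refine heven ⟨_, _, hp.isHole_cons (z := c) (by norm_num) ?_ (by simpa using hxc.symm)
    (by simpa using hB.isClique _ hc hc' hcc'.symm) ?_, 3, rfl⟩
  · simp [Fin.forall_fin_succ, (hne hc).symm, hB.ne_of_mem (hpred ha) (hsucc hc) (by omega),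
      hB.ne_of_mem (hpred ha') (hsucc hc) (by omega), hB.ne_of_mem hb0 (hsucc hc) (by omega), hcc']
  · simp [Fin.forall_fin_succ, hB.not_adj_of_mem (hsucc hc) (hpred ha) (by omega),
      hB.not_adj_of_mem (hsucc hc) (hpred ha') (by omega), hc'b c hc hxc]

end IsBuoy

theorem IsTransversal.isHole {ℓ : ℕ} {B : ZMod ℓ → Set V} {a b : V} {k : ℕ → V}
    (hk : IsTransversal G B a b k) (hB : IsBuoy G ℓ B) (ha : a ∈ B (-1)) (hab : G.Adj a b) :
    IsHole G (ℓ - 2 + 2) (Fin.cons a fun t : Fin (ℓ - 2 + 1) => k t : Fin (ℓ - 2 + 2) → V) := by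
  have hl := hB.five_le
  have ha' : a ∈ B (ℓ - 1 : ℕ) := by rwa [ZMod.natCast_self_sub (by omega), Nat.cast_one]
  refine (hB.isInducedPath (j := 0) (by omega) (fun t => by simpa using hk.mem t)
    (fun t => by simpa using hk.adj t (by omega))).isHole_cons (by omega)
    (fun t => hB.ne_of_mem (hk.mem t) ha' (by omega)) (by simpa [hk.zero] using hab)
    (by simpa using hk.adj_last.symm) fun t ht ht' => hB.not_adj_of_mem ha' (hk.mem t) (by omega)

/-- A counterexample to the theorem at the bag `B 0`, with the neighbour `a` of `x` in `B (-1)`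
chosen adjacent to `b`. -/
structure Straddle (G : SimpleGraph V) (ℓ : ℕ) (B : ZMod ℓ → Set V) (x a b c : V) : Prop where
  buoy : IsBuoy G ℓ B
  odd : Odd ℓ
  panFree : ¬HasInducedPan G
  evenHoleFree : ¬HasEvenHole G
  not_mem : ∀ j, x ∉ B j
  mem_a : a ∈ B (-1)
  mem_b : b ∈ B 0
  mem_c : c ∈ B 1
  adj_xa : G.Adj x a
  adj_ab : G.Adj a b
  adj_xc : G.Adj x c
  not_adj_xb : ¬G.Adj x b

namespace Straddle

variable {ℓ : ℕ} {B : ZMod ℓ → Set V} {x a b c v : V} {k : ℕ → V}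

theorem mem_a' (h : Straddle G ℓ B x a b c) : a ∈ B (ℓ - 1 : ℕ) := by
  rw [ZMod.natCast_self_sub (by linarith [h.buoy.five_le]), Nat.cast_one]; exact h.mem_a

theorem mem_b' (h : Straddle G ℓ B x a b c) : b ∈ B (0 : ℕ) := by simpa using h.mem_b

theorem mem_c' (h : Straddle G ℓ B x a b c) : c ∈ B (1 : ℕ) := by simpa using h.mem_c

theorem ne_x (h : Straddle G ℓ B x a b c) {j : ZMod ℓ} (hv : v ∈ B j) : v ≠ x :=
  ne_of_mem_of_not_mem hv (h.not_mem j)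

theorem not_adj_x_of_adj_b (h : Straddle G ℓ B x a b c) (hv : v ∈ B 1) (hbv : G.Adj b v) :
    ¬G.Adj x v := fun hxv => h.not_adj_xb <|
  h.buoy.adj_mid_of_adj_ends h.evenHoleFree h.not_mem (j := 0) (by simpa using h.mem_a) h.mem_b
    (by simpa using hv) h.adj_ab hbv h.adj_xa hxv

theorem not_adj_bc (h : Straddle G ℓ B x a b c) : ¬G.Adj b c :=
  fun hbc => h.not_adj_x_of_adj_b h.mem_c hbc h.adj_xc

theorem exists_isHole (h : Straddle G ℓ B x a b c) :
    ∃ w ∈ B (1 : ℕ), IsHole G 5 ![c, x, a, b, w] := by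
  have hl := h.buoy.five_le
  obtain ⟨w, hw, hbw⟩ := h.buoy.exists_adj_add_one h.mem_b
  rw [zero_add] at hw
  have hcw : c ≠ w := fun e => h.not_adj_x_of_adj_b hw (e ▸ hbw) (e ▸ h.adj_xc)
  have hp : IsInducedPath G ![x, a, b, w] :=
    (h.buoy.isInducedPath (j := -1) (by omega) (by simp [Fin.forall_fin_succ, h.mem_a, h.mem_b, hw])
      (by simp [Fin.forall_fin_two, h.adj_ab, hbw])).cons
      (by simp [Fin.forall_fin_succ, h.ne_x h.mem_a, h.ne_x h.mem_b, h.ne_x hw])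
      (by simpa using h.adj_xa)
      (by simp [Fin.forall_fin_succ, h.not_adj_xb, h.not_adj_x_of_adj_b hw hbw])
  refine ⟨w, by simpa using hw, hp.isHole_cons (by norm_num) ?_ (by simpa using h.adj_xc.symm)
    (by simpa using h.buoy.isClique 1 h.mem_c hw hcw) ?_⟩
  · simp [Fin.forall_fin_succ, (h.ne_x h.mem_c).symm, hcw.symm,
      h.buoy.ne_of_mem h.mem_a' h.mem_c' (by omega), h.buoy.ne_of_mem h.mem_b' h.mem_c' (by omega)]
  · simp [Fin.forall_fin_succ, G.adj_comm c, h.not_adj_bc,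
      h.buoy.not_adj_of_mem h.mem_a' h.mem_c' (by omega)]

theorem adj_x_of_adj_a (h : Straddle G ℓ B x a b c) (hv : v ∈ B (ℓ - 2 : ℕ)) (hav : G.Adj a v) :
    G.Adj x v := by
  by_contra hxv
  have hl := h.buoy.five_le
  obtain ⟨w, hw, hH⟩ := h.exists_isHole
  refine h.panFree (hH.hasInducedPan (h.buoy.ne_of_mem h.mem_c' hv (by omega)) ?_
    (h.buoy.not_adj_of_mem h.mem_c' hv (by omega)) 1 ?_)
  · simp [Fin.forall_fin_succ, (h.ne_x hv).symm, h.buoy.ne_of_mem h.mem_a' hv (by omega),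
      h.buoy.ne_of_mem h.mem_b' hv (by omega), h.buoy.ne_of_mem hw hv (by omega)]
  · simp [Fin.forall_fin_succ, hxv, hav, h.buoy.not_adj_of_mem h.mem_b' hv (by omega),
      h.buoy.not_adj_of_mem hw hv (by omega)]

theorem not_adj_x_of_mem (h : Straddle G ℓ B x a b c) {t : ℕ} (ht : 3 ≤ t) (ht' : t + 3 ≤ ℓ)
    (hv : v ∈ B t) : ¬G.Adj x v := by
  intro hxv
  obtain ⟨w, hw, hH⟩ := h.exists_isHole
  refine h.panFree (hH.hasInducedPan (h.buoy.ne_of_mem h.mem_c' hv (by omega)) ?_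
    (h.buoy.not_adj_of_mem h.mem_c' hv (by omega)) 0 ?_)
  · simp [Fin.forall_fin_succ, (h.ne_x hv).symm, h.buoy.ne_of_mem h.mem_a' hv (by omega),
      h.buoy.ne_of_mem h.mem_b' hv (by omega), h.buoy.ne_of_mem hw hv (by omega)]
  · simp [Fin.forall_fin_succ, hxv, h.buoy.not_adj_of_mem h.mem_a' hv (by omega),
      h.buoy.not_adj_of_mem h.mem_b' hv (by omega), h.buoy.not_adj_of_mem hw hv (by omega)]

theorem adj_c_two (h : Straddle G ℓ B x a b c) (hk : IsTransversal G B a b k) : G.Adj c (k 2) := by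
  by_contra hck
  have hl := h.buoy.five_le
  have hk1 : k 1 ∈ B 1 := by simpa using hk.mem 1
  have hbk1 : G.Adj b (k 1) := by simpa [hk.zero] using hk.adj 0 (by omega)
  have hck1 : k 1 ≠ c := fun e => h.not_adj_x_of_adj_b hk1 hbk1 (e ▸ h.adj_xc)
  refine h.panFree ((hk.isHole h.buoy h.mem_a h.adj_ab).hasInducedPan
    (h.buoy.ne_of_mem h.mem_a' h.mem_c' (by omega)) (fun t => ?_)
    (h.buoy.not_adj_of_mem h.mem_a' h.mem_c' (by omega)) ⟨1, by omega⟩ fun t => ?_)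
  · rcases eq_or_ne (t : ℕ) 1 with e | e
    · simpa [e] using hck1
    · exact h.buoy.ne_of_mem (hk.mem t) h.mem_c' (by omega)
  · rw [Fin.ext_iff]
    rcases (show (t : ℕ) = 0 ∨ (t : ℕ) = 1 ∨ (t : ℕ) = 2 ∨ 3 ≤ (t : ℕ) by omega) with e | e | e | e
    · simpa [e, hk.zero] using h.not_adj_bc
    · simpa [e] using h.buoy.isClique 1 hk1 h.mem_c hck1
    · simpa [e, G.adj_comm] using hck
    · simpa [show (t : ℕ) ≠ 1 by omega]
        using h.buoy.not_adj_of_mem (hk.mem t) h.mem_c' (by omega)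

theorem adj_x_two (h : Straddle G ℓ B x a b c) (hk : IsTransversal G B a b k) : G.Adj x (k 2) := by
  by_contra hxk
  have hl := h.buoy.five_le
  have hp : IsInducedPath G fun t : Fin (ℓ - 4 + 1) => k (t + 2) :=
    h.buoy.isInducedPath (j := 2) (by omega)
      (fun t => by convert hk.mem (t + 2) using 2; push_cast; ring)
      (fun t => by simpa [add_right_comm] using hk.adj (t + 2) (by omega))
  have hp' := hp.cons (v := c) (fun t => h.buoy.ne_of_mem (hk.mem _) h.mem_c' (by omega))
    (by simpa using h.adj_c_two hk)
    (fun t => h.buoy.not_adj_of_mem h.mem_c' (hk.mem ((t : ℕ) + 1 + 2)) (by omega))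
  have hH := hp'.isHole_cons (m := ℓ - 4 + 1) (z := x) (by omega)
    (fun t => Fin.cases (by simpa using h.ne_x h.mem_c)
      (fun t => by simpa using h.ne_x (hk.mem _)) t)
    (by simpa using h.adj_xc)
    (by simpa [show ℓ - 4 + 2 = ℓ - 2 by omega] using h.adj_x_of_adj_a (hk.mem _) hk.adj_last.symm)
    (fun t => Fin.cases (by simp) (fun s _ hs => by
      rcases eq_or_ne (s : ℕ) 0 with e | e
      · simpa [e] using hxk
      · simpa using h.not_adj_x_of_mem (t := s + 2) (by omega) (by simp at hs; omega) (hk.mem _)) t)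
  obtain ⟨r, hr⟩ := h.odd
  exact h.evenHoleFree ⟨_, _, hH, r, by omega⟩

theorem false_of_seven_le (h : Straddle G ℓ B x a b c) (hk : IsTransversal G B a b k)
    (hl : 7 ≤ ℓ) : False := by
  have hk1 : k 1 ∈ B 1 := by simpa using hk.mem 1
  have hk2 : k 2 ∈ B (1 + 1) := by rw [one_add_one_eq_two]; simpa using hk.mem 2
  have hbk1 : G.Adj b (k 1) := by simpa [hk.zero] using hk.adj 0 (by omega)
  have hp : IsInducedPath G ![a, b, k 1, k 2] :=
    h.buoy.isInducedPath (j := -1) (by omega)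
      (by simp [Fin.forall_fin_succ, h.mem_a, h.mem_b, hk1, hk2])
      (by simp [Fin.forall_fin_succ, h.adj_ab, hbk1, hk.adj 1 (by omega)])
  have hH := hp.isHole_cons (z := x) (by norm_num)
    (by simp [Fin.forall_fin_succ, h.ne_x h.mem_a, h.ne_x h.mem_b, h.ne_x hk1, h.ne_x hk2])
    (by simpa using h.adj_xa) (by simpa using h.adj_x_two hk)
    (by simp [Fin.forall_fin_succ, h.not_adj_xb, h.not_adj_x_of_adj_b hk1 hbk1])
  have hk3 := hk.mem 3
  refine h.panFree (hH.hasInducedPan (h.ne_x hk3).symm ?_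
    (h.not_adj_x_of_mem le_rfl (by omega) hk3) 3 ?_)
  · simp [Fin.forall_fin_succ, h.buoy.ne_of_mem h.mem_a' hk3 (by omega),
      h.buoy.ne_of_mem h.mem_b' hk3 (by omega), h.buoy.ne_of_mem (hk.mem 1) hk3 (by omega),
      h.buoy.ne_of_mem (hk.mem 2) hk3 (by omega)]
  · simp [Fin.forall_fin_succ, h.buoy.not_adj_of_mem h.mem_a' hk3 (by omega),
      h.buoy.not_adj_of_mem h.mem_b' hk3 (by omega),
      h.buoy.not_adj_of_mem (hk.mem 1) hk3 (by omega), hk.adj 2 (by omega)]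

theorem false_of_eq_five (h : Straddle G ℓ B x a b c) (hk : IsTransversal G B a b k)
    (hl : ℓ = 5) : False := by
  have hk1 : k 1 ∈ B 1 := by simpa using hk.mem 1
  have hbk1 : G.Adj b (k 1) := by simpa [hk.zero] using hk.adj 0 (by omega)
  obtain ⟨b', hb', hcb'⟩ := h.buoy.exists_adj_sub_one h.mem_c
  rw [sub_self] at hb'
  have hbb' : b ≠ b' := fun e => h.not_adj_bc (e ▸ hcb'.symm)
  have hb'k1 : G.Adj b' (k 1) :=
    (h.buoy.adj_or_adj_of_adj_of_adj h.evenHoleFree (j := 0) h.mem_b hb' (by simpa using hk1)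
      (by simpa using h.mem_c) hbk1 hcb'.symm).resolve_left h.not_adj_bc
  have h5 : (5 : ZMod ℓ) = 0 := by rw [← ZMod.natCast_self, hl, Nat.cast_ofNat]
  have hb'a : G.Adj b' a := by
    have := h.buoy.adj_or_adj_of_wrap h.odd h.evenHoleFree (j := 0)
      (u := fun t => [b', c, k 2, k 3, a, b].getD t b) (fun t ht => by
        rw [hl] at ht
        interval_cases t
        · simpa using hb'
        · simpa using h.mem_c
        · simpa using hk.mem 2
        · simpa using hk.mem 3
        · simpa [hl] using h.mem_a'
        · simpa [h5] using h.mem_b)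
      (fun t ht => by
        rw [hl] at ht
        interval_cases t
        · simpa using hcb'.symm
        · simpa using h.adj_c_two hk
        · simpa using hk.adj 2 (by omega)
        · simpa [hl] using hk.adj_last
        · simpa using h.adj_ab)
      (by simpa [hl] using hbb'.symm)
    simpa [hl, G.adj_comm c, h.not_adj_bc] using this
  have hxb' : G.Adj x b' :=
    h.buoy.adj_mid_of_adj_ends h.evenHoleFree h.not_mem (j := 0) (by simpa using h.mem_a) hb'
      (by simpa using h.mem_c) hb'a.symm hcb'.symm h.adj_xa h.adj_xc
  refine h.not_adj_x_of_adj_b hk1 hbk1 (h.buoy.adj_mid_of_adj_ends h.evenHoleFree h.not_mem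
    (j := 1) (by simpa using hb') hk1 ?_ hb'k1 (hk.adj 1 (by omega)) hxb' (h.adj_x_two hk))
  convert hk.mem 2 using 2; norm_num

theorem false (h : Straddle G ℓ B x a b c) : False := by
  obtain ⟨k, hk⟩ := h.buoy.exists_isTransversal h.odd h.evenHoleFree h.mem_a h.mem_b h.adj_ab
  obtain ⟨r, hr⟩ := h.odd
  rcases (show ℓ = 5 ∨ 7 ≤ ℓ by have := h.buoy.five_le; omega) with hl | hl
  · exact h.false_of_eq_five hk hl
  · exact h.false_of_seven_le hk hl

end Straddle

end

theorem stmt_12 {V : Type*} (G : SimpleGraph V)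
    (hpan : ¬ HasInducedPan G) (heven : ¬ HasEvenHole G)
    (ℓ : ℕ) (hodd : Odd ℓ) (B : ZMod ℓ → Set V) (hB : IsBuoy G ℓ B)
    (x : V) (hx : x ∉ ⋃ j, B j) (i : ZMod ℓ)
    (hprev : ∃ b ∈ B (i - 1), G.Adj x b) (hnext : ∃ b ∈ B (i + 1), G.Adj x b) :
    ∀ b ∈ B i, G.Adj x b := by
  intro b hb
  by_contra hxb
  obtain ⟨a, ha, hxa⟩ := hprev
  obtain ⟨c, hc, hxc⟩ := hnext
  have hB' := hB.comp_add i
  have hx' : ∀ j, x ∉ B (i + j) := fun j hj => hx (Set.mem_iUnion.2 ⟨_, hj⟩)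
  rcases hB'.exists_common_nbr heven hx' (by simpa [sub_eq_add_neg] using ha) (by simpa using hb)
    hc hxa hxc hxb with ⟨a', ha', hxa', ha'b⟩ | ⟨c', hc', hxc', hc'b⟩
  · exact Straddle.false
      ⟨hB', hodd, hpan, heven, hx', ha', by simpa using hb, hc, hxa', ha'b, hxc, hxb⟩
  · exact Straddle.false (B := fun j => B (i + -j))
      ⟨hB'.comp_neg, hodd, hpan, heven, fun j => hx' _, by simpa using hc', by simpa using hb,
        by simpa [sub_eq_add_neg] using ha, hxc', hc'b, hxa, hxb⟩
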